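/- Let (E, V) be an affine space over a field F with V finite-dimensional, let f : E → E be an affine map with linear part f̄, and assume X - 1 divides the minimal polynomial of f̄ (equivalently, the minimal polynomial of f̄ vanishes at 1). If s is a nonempty affine subspace of E invariant under f (f maps s into s) whose direction has dimension exactly τ(f), then the direction of s is contained in the generalized eigenspace maxGenEigenspace(f̄, 1). -/

import Mathlib

open Polynomial

variable {F V E : Type*} [Field F] [AddCommGroup V] [Module F V] [AddTorsor V E]

/-- `τ(α, L)`: the smallest `k ∈ ℕ` such that
`α ∈ range (L - id) + ker ((L - id)^k)`. -/
noncomputable def tau (L : V →ₗ[F] V) (α : V) : ℕ :=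
  sInf {k : ℕ | α ∈ LinearMap.range (L - LinearMap.id : V →ₗ[F] V) ⊔
    LinearMap.ker ((L - LinearMap.id : V →ₗ[F] V) ^ k)}

/-- `τ(f)` for an affine map `f : E → E`: `τ(f(A) -ᵥ A, f.linear)` for a point `A`
(this does not depend on the choice of `A`). -/
noncomputable def tauAff (f : E →ᵃ[F] E) : ℕ :=
  tau f.linear (f (Classical.arbitrary E) -ᵥ (Classical.arbitrary E))

/-! Put `N := f̄ - id` and `W := s.direction`, an `N`-invariant subspace containing
`α := f A -ᵥ A` for any `A ∈ s`. Fitting's decomposition of `N` on `W` writes `α = y + N z` with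
`y ∈ W` killed by a power of `N`; as `τ` only sees `α` modulo `range N`, `τ(y) = τ(α) = dim W`.
If `dim W = k + 1`, then `y ∉ range N + ker N^k`, and such a vector has linearly independent
iterates `y, N y, …, N^k y`: a nonzero polynomial `p` of degree `≤ k` with `p(N) y = 0` factors
as `X^j q` with `q(0) ≠ 0`, and `q(N) y ∈ ker N^j` then puts `y` in `range N + ker N^k`. These
`k + 1` iterates therefore span `W`, and they are all killed by a power of `N`. -/

open LinearMap Module

theorem aeval_apply_eq_add_coeff_zero_smul {R M : Type*} [CommRing R] [AddCommGroup M]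
    [Module R M] (N : Module.End R M) (q : R[X]) (x : M) :
    aeval N q x = N (aeval N q.divX x) + q.coeff 0 • x := by
  conv_lhs => rw [← X_mul_divX_add q]
  simp only [map_add, map_mul, aeval_X, aeval_C, Module.End.mul_apply, LinearMap.add_apply,
    Module.algebraMap_end_apply]

section IteratesOutsideRangeSupKer

variable {N : Module.End F V} {x : V} {k : ℕ}

theorem eq_zero_of_aeval_apply_eq_zero_of_notMem_range_sup_ker
    (hx : x ∉ range N ⊔ ker (N ^ k)) {p : F[X]} (hdeg : p.natDegree ≤ k)
    (hp : aeval N p x = 0) : p = 0 := by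
  by_contra hp0
  obtain ⟨q, hpq, hq⟩ := exists_eq_pow_rootMultiplicity_mul_and_not_dvd p hp0 0
  set m := p.rootMultiplicity 0
  rw [map_zero, sub_zero] at hpq hq
  rw [X_dvd_iff] at hq
  have hmk : m ≤ k := by
    have := natDegree_le_of_dvd (Dvd.intro q hpq.symm) hp0
    rw [natDegree_X_pow] at this
    omega
  have hqx : aeval N q x ∈ ker (N ^ k) := N.iterateKer.monotone hmk <| show _ ∈ ker (N ^ m) by
    rw [mem_ker, ← hp, hpq, map_mul, map_pow, aeval_X, Module.End.mul_apply]
  have hcx : q.coeff 0 • x ∈ range N ⊔ ker (N ^ k) := by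
    rw [← add_sub_cancel_left (N (aeval N q.divX x)) (q.coeff 0 • x),
      ← aeval_apply_eq_add_coeff_zero_smul]
    exact sub_mem (Submodule.mem_sup_right hqx) (Submodule.mem_sup_left (mem_range_self N _))
  exact hx ((Submodule.smul_mem_iff _ hq).mp hcx)

theorem linearIndependent_pow_apply_of_notMem_range_sup_ker (hx : x ∉ range N ⊔ ker (N ^ k)) :
    LinearIndependent F (fun i : Fin (k + 1) => (N ^ (i : ℕ)) x) := by
  rw [Fintype.linearIndependent_iff]
  intro g hg
  set p : F[X] := ∑ i : Fin (k + 1), monomial i (g i)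
  have hp : p = 0 := by
    refine eq_zero_of_aeval_apply_eq_zero_of_notMem_range_sup_ker hx
      (natDegree_sum_le_of_forall_le _ _ fun i _ => (natDegree_monomial_le _).trans (by omega)) ?_
    simpa [p, map_sum, aeval_monomial] using hg
  intro i
  simpa [p, finsetSum_coeff, coeff_monomial, Fin.val_inj] using congr_arg (coeff · i) hp

theorem succ_le_finrank_of_notMem_range_sup_ker [FiniteDimensional F V] {U : Submodule F V}
    (hU : ∀ v ∈ U, N v ∈ U) (hxU : x ∈ U) (hx : x ∉ range N ⊔ ker (N ^ k)) :
    k + 1 ≤ finrank F U := by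
  have hmem (i : ℕ) : (N ^ i) x ∈ U := by
    rw [Module.End.pow_apply]
    exact Set.MapsTo.iterate hU i hxU
  have hli : LinearIndependent F (fun i : Fin (k + 1) => (⟨(N ^ (i : ℕ)) x, hmem i⟩ : U)) :=
    .of_comp U.subtype (linearIndependent_pow_apply_of_notMem_range_sup_ker hx)
  simpa using hli.fintype_card_le_finrank

end IteratesOutsideRangeSupKer

theorem exists_mem_inf_ker_pow_sub_mem_range {R M : Type*} [Ring R] [AddCommGroup M] [Module R M]
    [IsArtinian R M] {N : Module.End R M} {W : Submodule R M} (hW : ∀ v ∈ W, N v ∈ W) {x : M}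
    (hx : x ∈ W) : ∃ n, ∃ y ∈ W ⊓ ker (N ^ n), x - y ∈ range N := by
  obtain ⟨n, hcod, hn⟩ := ((N.restrict hW).eventually_codisjoint_ker_pow_range_pow.and
    (Filter.eventually_ge_atTop 1)).exists
  obtain ⟨a, ha, b, ⟨c, rfl⟩, hab⟩ :=
    Submodule.mem_sup.mp (hcod.eq_top ▸ Submodule.mem_top (x := (⟨x, hx⟩ : W)))
  rw [Module.End.pow_restrict] at ha hab
  refine ⟨n, a, ⟨a.2, ?_⟩, ⟨(N ^ (n - 1)) c, ?_⟩⟩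
  · simpa using congr_arg Subtype.val ha
  · rw [← Module.End.mul_apply, ← pow_succ', Nat.sub_add_cancel hn, eq_sub_iff_add_eq']
    simpa using congr_arg Subtype.val hab

theorem notMem_range_sup_ker_of_lt_tau {L : Module.End F V} {α : V} {k : ℕ}
    (hk : k < tau L α) : α ∉ range (L - LinearMap.id) ⊔ ker ((L - LinearMap.id) ^ k) :=
  Nat.notMem_of_lt_sInf hk

theorem tau_eq_of_sub_mem_range (L : Module.End F V) {α β : V}
    (h : α - β ∈ range (L - LinearMap.id)) : tau L α = tau L β := by
  unfold tau
  congr 1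
  ext k
  rw [Set.mem_ofPred_eq, Set.mem_ofPred_eq, ← sub_add_cancel α β,
    Submodule.add_mem_iff_right _ (Submodule.mem_sup_left h)]

theorem le_maxGenEigenspace_of_finrank_le_tau [FiniteDimensional F V] {L : Module.End F V}
    {W : Submodule F V} (hW : ∀ v ∈ W, L v ∈ W) {α : V} (hα : α ∈ W)
    (hdim : finrank F W ≤ tau L α) : W ≤ Module.End.maxGenEigenspace L 1 := by
  set N := L - LinearMap.id
  have hWN (v : V) (hv : v ∈ W) : N v ∈ W := sub_mem (hW v hv) hv
  obtain ⟨n, y, hy, hαy⟩ := exists_mem_inf_ker_pow_sub_mem_range hWN hα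
  have hKN (v : V) (hv : v ∈ W ⊓ ker (N ^ n)) : N v ∈ W ⊓ ker (N ^ n) := by
    refine Submodule.mem_inf.mpr ⟨hWN v hv.1, ?_⟩
    rw [mem_ker, ← Module.End.mul_apply, pow_mul_comm', Module.End.mul_apply,
      mem_ker.mp (Submodule.mem_inf.mp hv).2, map_zero]
  have hfin : finrank F W ≤ finrank F ↥(W ⊓ ker (N ^ n)) := by
    rcases h : tau L α with _ | k
    · omega
    · refine hdim.trans (h ▸ succ_le_finrank_of_notMem_range_sup_ker hKN hy fun hyk => ?_)
      refine notMem_range_sup_ker_of_lt_tau (show k < tau L α by omega) ?_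
      rw [← sub_add_cancel α y]
      exact add_mem (Submodule.mem_sup_left hαy) hyk
  have hWK : W ≤ ker (N ^ n) := inf_eq_left.mp (Submodule.eq_of_le_of_finrank_le inf_le_left hfin)
  intro v hv
  rw [Module.End.mem_maxGenEigenspace, one_smul, Module.End.one_eq_id]
  exact ⟨n, hWK hv⟩

theorem tauAff_eq (f : E →ᵃ[F] E) (A : E) : tauAff f = tau f.linear (f A -ᵥ A) := by
  refine tau_eq_of_sub_mem_range _ ⟨Classical.arbitrary E -ᵥ A, ?_⟩
  rw [vsub_sub_vsub_comm, LinearMap.sub_apply, AffineMap.linearMap_vsub, LinearMap.id_apply]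

theorem AffineSubspace.linear_mem_direction_of_forall_mem {R V P : Type*} [Ring R]
    [AddCommGroup V] [Module R V] [AddTorsor V P] {f : P →ᵃ[R] P} {s : AffineSubspace R P}
    (hs : ∀ p ∈ s, f p ∈ s) : ∀ v ∈ s.direction, f.linear v ∈ s.direction := fun _ hv =>
  AffineSubspace.direction_le (AffineSubspace.map_le_iff_le_comap.mpr hs)
    (s.map_direction f ▸ Submodule.mem_map_of_mem hv)

theorem direction_le_maxGenEigenspace_of_dim_eq_tau_general
    [FiniteDimensional F V] (f : E →ᵃ[F] E)
    (s : AffineSubspace F E) (hne : (s : Set E).Nonempty)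
    (hinv : ∀ P ∈ s, f P ∈ s)
    (hdim : Module.finrank F s.direction = tauAff f) :
    s.direction ≤ Module.End.maxGenEigenspace f.linear 1 := by
  obtain ⟨A, hA⟩ := hne
  refine le_maxGenEigenspace_of_finrank_le_tau
    (AffineSubspace.linear_mem_direction_of_forall_mem hinv)
    (AffineSubspace.vsub_mem_direction (hinv A hA) hA) ?_
  rw [hdim, tauAff_eq f A]

/-- Suppose `X - 1` divides the minimal polynomial of `f.linear`. If
`s` is a nonempty `f`-invariant affine subspace of `E` whose direction has dimension
exactly `τ(f)`, then the direction of `s` is contained in the generalized eigenspace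
of `f.linear` for eigenvalue 1. -/
theorem direction_le_maxGenEigenspace_of_dim_eq_tau
    [FiniteDimensional F V] (f : E →ᵃ[F] E)
    (hdvd : X - C 1 ∣ minpoly F f.linear)
    (s : AffineSubspace F E) (hne : (s : Set E).Nonempty)
    (hinv : ∀ P ∈ s, f P ∈ s)
    (hdim : Module.finrank F s.direction = tauAff f) :
    s.direction ≤ Module.End.maxGenEigenspace f.linear 1 :=
  direction_le_maxGenEigenspace_of_dim_eq_tau_general f s hne hinv hdim
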